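/- Let n, m be positive integers, t a non-negative integer, and N an integer with (t+1)(n−1)(m−1) + 1 ≤ N ≤ (t+2)(n−1)(m−1). Let G be a graph on N vertices with minimum degree δ(G) ≥ N − t(n−1) − 1. Then for every tree T on n vertices, every red-blue coloring of E(G) contains a red copy of T or a blue copy of K_m. -/

import Mathlib

open SimpleGraph
open scoped Classical

/-- `H` embeds into `G`: there is an injective graph homomorphism from `H` to `G`. -/
def Copies {α : Type*} {β : Type*} (H : SimpleGraph α) (G : SimpleGraph β) : Prop :=
  ∃ f : α → β, Function.Injective f ∧ ∀ ⦃a b : α⦄, H.Adj a b → G.Adj (f a) (f b)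

/-- the star `K_{1,ℓ}` with `ℓ` leaves and center `0`. -/
def starGraph (ℓ : ℕ) : SimpleGraph (Fin (ℓ + 1)) :=
  SimpleGraph.fromRel (fun a _ => a = 0)

/-- the graph of color `i` for a symmetric edge-coloring `c`. -/
def colorGraph {N k : ℕ} (c : Fin N → Fin N → Fin k) (i : Fin k) : SimpleGraph (Fin N) :=
  SimpleGraph.fromRel (fun a b => c a b = i)

/-- `K_N → (G₁, G₂)`: every red-blue coloring of `E(K_N)` yields a red `G₁` or a blue `G₂`. -/
def RamseyProp2 {α β : Type*} (N : ℕ) (G₁ : SimpleGraph α) (G₂ : SimpleGraph β) : Prop :=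
  ∀ R : SimpleGraph (Fin N), Copies G₁ R ∨ Copies G₂ Rᶜ

/-- the 2-color Ramsey number `r(G₁, G₂)`. -/
noncomputable def ramsey2 {α β : Type*} (G₁ : SimpleGraph α) (G₂ : SimpleGraph β) : ℕ :=
  sInf {N | RamseyProp2 N G₁ G₂}

/-- `K_N → (G₁, G₂, G₃)` for 3-colorings. -/
def RamseyProp3 {α β γ : Type*} (N : ℕ) (G₁ : SimpleGraph α) (G₂ : SimpleGraph β)
    (G₃ : SimpleGraph γ) : Prop :=
  ∀ c : Fin N → Fin N → Fin 3, (∀ a b, c a b = c b a) →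
    Copies G₁ (colorGraph c 0) ∨ Copies G₂ (colorGraph c 1) ∨ Copies G₃ (colorGraph c 2)

/-- the 3-color Ramsey number `r(G₁, G₂, G₃)`. -/
noncomputable def ramsey3 {α β γ : Type*} (G₁ : SimpleGraph α) (G₂ : SimpleGraph β)
    (G₃ : SimpleGraph γ) : ℕ :=
  sInf {N | RamseyProp3 N G₁ G₂ G₃}

/-- the chromatic number as a natural number. -/
noncomputable def chrom {β : Type*} (H : SimpleGraph β) : ℕ :=
  sInf {k | H.Colorable k}

/-- the surplus `s(H)`: the minimum size of a color class over proper colorings of `H`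
with `chrom H` colors. -/
noncomputable def surplus {β : Type*} [Fintype β] (H : SimpleGraph β) : ℕ :=
  sInf {s | ∃ C : H.Coloring (Fin (chrom H)), ∃ i : Fin (chrom H),
    s = (Finset.univ.filter (fun v => C v = i)).card}

/-!
If there is no red copy of `T`, every nonempty vertex set contains a vertex with fewer than `n - 1`
red neighbours inside it, because a graph of minimum degree at least `n - 1` contains every tree on
`n` vertices (embed it leaf by leaf). Each vertex also misses at most `t (n - 1)` vertices in `G`,
so every nonempty set contains a vertex joined in blue to all but fewer than `(t + 1) (n - 1)` of
its other members. Picking such a vertex and passing to its blue neighbourhood `m - 1` times leaves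
a nonempty set since `N > (t + 1) (n - 1) (m - 1)`, and the picked vertices form a blue `K_m`.
-/

open Finset

lemma copies_iff_isContained {α β : Type*} {H : SimpleGraph α} {G : SimpleGraph β} :
    Copies H G ↔ H ⊑ G :=
  ⟨fun ⟨f, hf, hadj⟩ => ⟨⟨⟨f, fun h => hadj h⟩, hf⟩⟩,
    fun ⟨f⟩ => ⟨f, f.injective, fun _ _ => f.toHom.map_adj⟩⟩

namespace SimpleGraph

variable {α V W : Type*}

lemma isContained_of_copy_induce_compl_leaf {T : SimpleGraph α} {H : SimpleGraph W} {u v : α}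
    (hv : ∀ x, T.Adj v x ↔ x = u) (hu : u ∈ ({v}ᶜ : Set α)) (f : Copy (T.induce {v}ᶜ) H)
    {w : W} (hw : H.Adj (f ⟨u, hu⟩) w) (hfresh : w ∉ Set.range f) : T ⊑ H := by
  let g : α → W := fun x => if hx : x = v then w else f ⟨x, hx⟩
  have hgv : g v = w := dif_pos rfl
  have hg : ∀ x (hx : x ≠ v), g x = f ⟨x, hx⟩ := fun x hx => dif_neg hx
  have hg_ne : ∀ x, x ≠ v → g x ≠ w := fun x hx h => hfresh ⟨_, (hg x hx).symm.trans h⟩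
  have hadj : ∀ x (hx : x ≠ v), T.Adj v x → H.Adj (g v) (g x) := by
    intro x hx hvx
    obtain rfl := (hv x).1 hvx
    rw [hgv, hg x hx]
    exact hw.symm
  have hinj : Function.Injective g := by
    intro a b hab
    by_cases ha : a = v <;> by_cases hb : b = v
    · exact ha.trans hb.symm
    · exact absurd (hgv ▸ ha ▸ hab).symm (hg_ne b hb)
    · exact absurd (hgv ▸ hb ▸ hab) (hg_ne a ha)
    · rw [hg a ha, hg b hb] at hab
      exact congrArg Subtype.val (f.injective hab)
  refine ⟨⟨⟨g, fun {a b} hab => ?_⟩, hinj⟩⟩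
  by_cases ha : a = v <;> by_cases hb : b = v
  · exact absurd (ha ▸ hb ▸ hab) T.irrefl
  · exact ha ▸ hadj b hb (ha ▸ hab)
  · exact (hb ▸ hadj a ha (hb ▸ hab.symm)).symm
  · rw [hg a ha, hg b hb]
    exact f.toHom.map_adj (induce_adj.2 hab)

lemma exists_adj_notMem_of_card_le_degree {H : SimpleGraph W} [H.LocallyFinite] {s : Finset W}
    {x : W} (hx : x ∈ s) (hs : #s ≤ H.degree x) : ∃ w, H.Adj x w ∧ w ∉ s := by
  by_contra! h
  have hsub : H.neighborFinset x ⊆ s.erase x := fun w hw =>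
    mem_erase.2 ⟨(H.ne_of_adj ((mem_neighborFinset _ _ _).1 hw)).symm,
      h w ((mem_neighborFinset _ _ _).1 hw)⟩
  have := card_le_card hsub
  rw [card_neighborFinset_eq_degree, card_erase_of_mem hx] at this
  have := card_pos.2 ⟨x, hx⟩
  omega

theorem IsTree.isContained_of_le_degree [Fintype α] {T : SimpleGraph α} {H : SimpleGraph W}
    [Nonempty W] [H.LocallyFinite] (hT : T.IsTree) (hH : ∀ w, Fintype.card α - 1 ≤ H.degree w) :
    T ⊑ H := by
  induction hn : Fintype.card α generalizing α with
  | zero =>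
    have := hT.connected.nonempty
    exact absurd hn Fintype.card_ne_zero
  | succ k ih =>
    rcases k with _ | k
    · have : Subsingleton α := Fintype.card_le_one_iff_subsingleton.1 hn.le
      obtain ⟨w⟩ := ‹Nonempty W›
      exact ⟨⟨⟨fun _ => w, fun {a b} hab => absurd (Subsingleton.elim a b ▸ hab) T.irrefl⟩,
        Function.injective_of_subsingleton _⟩⟩
    · have : Nontrivial α := Fintype.one_lt_card_iff_nontrivial.1 (by omega)
      obtain ⟨v, hv⟩ := hT.exists_vert_degree_one_of_nontrivial
      obtain ⟨u, hvu, hu⟩ := degree_eq_one_iff_existsUnique_adj.1 hv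
      have hT' : (T.induce {v}ᶜ).IsTree :=
        ⟨hT.connected.induce_compl_singleton_of_degree_eq_one hv, hT.isAcyclic.induce _⟩
      have hcard : Fintype.card ({v}ᶜ : Set α) = k + 1 := by
        rw [Fintype.card_compl_set, hn, Set.card_singleton]; rfl
      obtain ⟨f⟩ := ih hT' (fun w => by have := hH w; omega) hcard
      have hu' : u ∈ ({v}ᶜ : Set α) := (T.ne_of_adj hvu).symm
      obtain ⟨w, hw, hfresh⟩ := exists_adj_notMem_of_card_le_degree (H := H)
        (mem_image_of_mem f (mem_univ ⟨u, hu'⟩)) (by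
          rw [card_image_of_injective (f := f) univ f.injective, card_univ, hcard]
          have := hH (f ⟨u, hu'⟩); omega)
      exact isContained_of_copy_induce_compl_leaf (fun x => ⟨hu x, fun h => h ▸ hvu⟩) hu' f hw
        fun ⟨x, hx⟩ => hfresh (hx ▸ mem_image_of_mem f (mem_univ x))

lemma card_filter_adj_le_degree_induce (R : SimpleGraph V) {s : Finset V} {v : V} (hv : v ∈ s) :
    #{u ∈ s | R.Adj v u} ≤ (R.induce (s : Set V)).degree ⟨v, hv⟩ := by
  rw [← card_neighborFinset_eq_degree, ← card_map (Function.Embedding.subtype _)]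
  refine card_le_card fun u hu => ?_
  rw [mem_filter] at hu
  simpa [hu.1] using hu.2

/-- Fewer than `d` (not at most `d`) neighbours inside `s`: `H.IsDegenerate d` is
`(d - 1)`-degeneracy, and `H.IsDegenerate 0` forces `V` to be empty. -/
def IsDegenerate (H : SimpleGraph V) (d : ℕ) : Prop :=
  ∀ s : Finset V, s.Nonempty → ∃ v ∈ s, #{u ∈ s | H.Adj v u} < d

theorem IsTree.isDegenerate_of_not_isContained [Fintype α] {T : SimpleGraph α}
    {R : SimpleGraph V} (hT : T.IsTree) (hTR : ¬T ⊑ R) :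
    R.IsDegenerate (Fintype.card α - 1) := by
  intro s hs
  by_contra! hdeg
  have : Nonempty (s : Set V) := hs.coe_sort
  exact hTR <| (hT.isContained_of_le_degree fun ⟨v, hv⟩ =>
    (hdeg v hv).trans (R.card_filter_adj_le_degree_induce hv)).trans (Copy.induce R _).isContained

lemma IsDegenerate.sup_of_degree_le {H K : SimpleGraph V} [K.LocallyFinite] {d e : ℕ}
    (hH : H.IsDegenerate d) (hK : ∀ v, K.degree v ≤ e) : (H ⊔ K).IsDegenerate (d + e) := by
  intro s hs
  obtain ⟨v, hv, hvd⟩ := hH s hs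
  refine ⟨v, hv, ?_⟩
  have hKv : #{u ∈ s | K.Adj v u} ≤ K.degree v :=
    card_le_card fun u hu => (mem_neighborFinset K v u).2 (mem_filter.1 hu).2
  calc _ ≤ #({u ∈ s | H.Adj v u} ∪ {u ∈ s | K.Adj v u}) :=
        card_le_card fun u hu => by simpa [← and_or_left] using hu
    _ ≤ #{u ∈ s | H.Adj v u} + #{u ∈ s | K.Adj v u} := card_union_le _ _
    _ < d + e := by have := hK v; omega

lemma IsDegenerate.exists_isNClique {H B : SimpleGraph V} {d : ℕ} (hH : H.IsDegenerate d)
    (hHB : Hᶜ ≤ B) (m : ℕ) (s : Finset V) (hs : m * d < #s) :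
    ∃ c ⊆ s, B.IsNClique (m + 1) c := by
  induction m generalizing s with
  | zero =>
    obtain ⟨v, hv⟩ := (card_pos (s := s)).1 (by omega)
    exact ⟨{v}, singleton_subset_iff.2 hv, isNClique_singleton.2 rfl⟩
  | succ m ih =>
    obtain ⟨v, hv, hvd⟩ := hH s (card_pos.1 (by omega))
    have hsplit : s ⊆ insert v ({u ∈ s | H.Adj v u} ∪ {u ∈ s | B.Adj v u}) := by
      intro u hu
      by_cases huv : v = u
      · exact huv ▸ mem_insert_self _ _
      · by_cases hadj : H.Adj v u
        · simp [hu, hadj]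
        · simp [hu, hHB ⟨huv, hadj⟩]
    have hcard : #s ≤ #{u ∈ s | B.Adj v u} + d := by
      have := (card_le_card hsplit).trans (card_insert_le _ _)
      have := card_union_le {u ∈ s | H.Adj v u} {u ∈ s | B.Adj v u}
      omega
    obtain ⟨c, hcs, hc⟩ := ih {u ∈ s | B.Adj v u} (by rw [add_mul] at hs; omega)
    exact ⟨insert v c, insert_subset hv (hcs.trans (filter_subset _ _)),
      hc.insert fun u hu => (mem_filter.1 (hcs hu)).2⟩

end SimpleGraph

theorem stmt10_general {V : Type*} [Fintype V] (n m t N : ℕ)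
    (hN1 : (t + 1) * (n - 1) * (m - 1) + 1 ≤ N)
    (hcard : Fintype.card V = N) (G : SimpleGraph V)
    (hδ : N - t * (n - 1) - 1 ≤ G.minDegree)
    (T : SimpleGraph (Fin n)) (hT : T.IsTree)
    (R : SimpleGraph V) :
    Copies T R ∨ Copies (⊤ : SimpleGraph (Fin m)) (G \ R) := by
  rw [copies_iff_isContained, copies_iff_isContained, or_iff_not_imp_left]
  intro hTR
  have hGc : ∀ v, Gᶜ.degree v ≤ t * (n - 1) := fun v => by
    have := G.minDegree_le_degree v
    rw [degree_compl, hcard]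
    omega
  have hdeg := (hT.isDegenerate_of_not_isContained hTR).sup_of_degree_le hGc
  rw [Fintype.card_fin] at hdeg
  obtain _ | m := m
  · exact IsContained.of_isEmpty
  have hm : m * (n - 1 + t * (n - 1)) < #(univ : Finset V) := by
    calc m * (n - 1 + t * (n - 1)) = (t + 1) * (n - 1) * (m + 1 - 1) := by
          rw [Nat.add_sub_cancel]; ring
      _ < #(univ : Finset V) := by rw [card_univ, hcard]; omega
  obtain ⟨c, -, hc⟩ :=
    hdeg.exists_isNClique (B := G \ R) (by simp [sdiff_eq, inf_comm]) m univ hm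
  exact (not_cliqueFree_iff_top_isContained _).1 hc.not_cliqueFree

theorem stmt10 {V : Type*} [Fintype V] (n m t N : ℕ) (hn : 1 ≤ n) (hm : 1 ≤ m)
    (hN1 : (t + 1) * (n - 1) * (m - 1) + 1 ≤ N) (hN2 : N ≤ (t + 2) * (n - 1) * (m - 1))
    (hcard : Fintype.card V = N) (G : SimpleGraph V)
    (hδ : N - t * (n - 1) - 1 ≤ G.minDegree)
    (T : SimpleGraph (Fin n)) (hT : T.IsTree)
    (R : SimpleGraph V) (hR : R ≤ G) :
    Copies T R ∨ Copies (⊤ : SimpleGraph (Fin m)) (G \ R) :=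
  stmt10_general n m t N hN1 hcard G hδ T hT R
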